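/- Any second-order limit function h arising in the 2RV condition lim_{s→∞}((v(sx)/v(s) − x^{−α})/Ã(s)) = h(x) with Ã ∈ RV_{−ρα}, ρα > 0, is necessarily of the form h(x) = c·x^{−α}·(1 − x^{−ρα})/(ρα) for some constant c ≠ 0, for all x > 0. -/

import Mathlib

/-!
Comparing the second-order expansion at `s` with the one at `s * x` shows that every limit
function satisfies `h (x * y) = h y * x ^ (-ρα) * x ^ (-α) + y ^ (-α) * h x`. The right-hand
side must be symmetric in `x` and `y`, and this symmetry alone pins `h` down to a multiple of
`x ^ (-α) * (1 - x ^ (-ρα))`. The algebra only needs `v` and `Ã` to be eventually nonzero,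
which regular variation already forces: `f t / f t → 1`.
-/

open Filter

/-- `f` is regularly varying at infinity with index `c`. -/
def RegVary (f : ℝ → ℝ) (c : ℝ) : Prop :=
  ∀ x > (0 : ℝ), Filter.Tendsto (fun t => f (t * x) / f t) Filter.atTop (nhds (x ^ c))

open Topology

def IsSecondOrderLimit (v A : ℝ → ℝ) (α : ℝ) (h : ℝ → ℝ) : Prop :=
  ∀ x > (0 : ℝ), Tendsto (fun s => (v (s * x) / v s - x ^ (-α)) / A s) atTop (𝓝 (h x))

lemma RegVary.eventually_ne_zero {f : ℝ → ℝ} {c : ℝ} (hf : RegVary f c) :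
    ∀ᶠ t in atTop, f t ≠ 0 := by
  have hratio : ∀ᶠ t in atTop, f (t * 1) / f t ≠ 0 :=
    (hf 1 one_pos).eventually_ne (by simp)
  filter_upwards [hratio] with t ht hft
  simp [hft] at ht

lemma IsSecondOrderLimit.map_mul {v A h : ℝ → ℝ} {α β : ℝ} (hv : RegVary v (-α))
    (hA : RegVary A β) (hlim : IsSecondOrderLimit v A α h) {x y : ℝ} (hx : 0 < x)
    (hy : 0 < y) : h (x * y) = h y * x ^ β * x ^ (-α) + y ^ (-α) * h x := by
  have hsx : Tendsto (fun s : ℝ => s * x) atTop atTop := tendsto_id.atTop_mul_const hx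
  have hshift := (hlim y hy).comp hsx
  have hcomb := ((hshift.mul (hA x hx)).mul (hv x hx)).add
    ((tendsto_const_nhds (x := y ^ (-α))).mul (hlim x hx))
  refine tendsto_nhds_unique (hlim (x * y) (mul_pos hx hy)) (hcomb.congr' ?_)
  filter_upwards [hv.eventually_ne_zero, hA.eventually_ne_zero,
    hsx.eventually hv.eventually_ne_zero, hsx.eventually hA.eventually_ne_zero]
    with s hvs hAs hvsx hAsx
  simp only [Function.comp_apply, ← mul_assoc, Real.mul_rpow hx.le hy.le]
  field_simp
  ring

lemma exists_eq_mul_rpow_mul_one_sub_rpow {g : ℝ → ℝ} {β γ : ℝ} (hβ : β ≠ 0)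
    (hg : ∀ x > (0 : ℝ), ∀ y > (0 : ℝ), g (x * y) = g y * x ^ β * x ^ γ + y ^ γ * g x) :
    ∃ K : ℝ, ∀ x > (0 : ℝ), g x = K * x ^ γ * (1 - x ^ β) := by
  have h2β : (2 : ℝ) ^ β ≠ 1 := by
    rcases hβ.lt_or_gt with hneg | hpos
    · exact (Real.rpow_lt_one_of_one_lt_of_neg one_lt_two hneg).ne
    · exact (Real.one_lt_rpow one_lt_two hpos).ne'
  have h2γ : (0 : ℝ) < 2 ^ γ := by positivity
  refine ⟨g 2 / (2 ^ γ * (1 - 2 ^ β)), fun x hx => ?_⟩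
  have hsymm : g x * 2 ^ γ * (1 - 2 ^ β) = g 2 * x ^ γ * (1 - x ^ β) := by
    have h12 := hg x hx 2 two_pos
    have h21 := hg 2 two_pos x hx
    rw [mul_comm] at h21
    linear_combination h21 - h12
  have hden : 1 - (2 : ℝ) ^ β ≠ 0 := sub_ne_zero.mpr h2β.symm
  field_simp
  linear_combination hsymm

theorem stmt15_general (v Atil h : ℝ → ℝ) (α ρ : ℝ) (hα : 0 < α) (hρ : 0 < ρ)
    (hv : RegVary v (-α))
    (hAtil : RegVary Atil (-(ρ * α)))
    (hlim : ∀ x > (0 : ℝ),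
      Tendsto (fun s => (v (s * x) / v s - x ^ (-α)) / Atil s) atTop (nhds (h x)))
    (hne : ∃ x > (0 : ℝ), h x ≠ 0) :
    ∃ c : ℝ, c ≠ 0 ∧ ∀ x > (0 : ℝ),
      h x = c * x ^ (-α) * (1 - x ^ (-(ρ * α))) / (ρ * α) := by
  have hρα : ρ * α ≠ 0 := (mul_pos hρ hα).ne'
  obtain ⟨K, hK⟩ := exists_eq_mul_rpow_mul_one_sub_rpow (neg_ne_zero.mpr hρα)
    fun x hx y hy => IsSecondOrderLimit.map_mul hv hAtil hlim hx hy
  have hK0 : K ≠ 0 := by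
    rintro rfl
    obtain ⟨x, hx, hhx⟩ := hne
    simp [hK x hx] at hhx
  refine ⟨K * (ρ * α), mul_ne_zero hK0 hρα, fun x hx => ?_⟩
  rw [hK x hx]
  field_simp

theorem stmt15 (v Atil h : ℝ → ℝ) (α ρ : ℝ) (hα : 0 < α) (hρ : 0 < ρ)
    (hv : RegVary v (-α)) (hvpos : ∀ t > (0 : ℝ), 0 < v t)
    (hAtil : RegVary Atil (-(ρ * α)))
    (hAtil0 : Tendsto Atil atTop (nhds 0))
    (hAtilne : ∀ t > (0 : ℝ), Atil t ≠ 0)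
    (hlim : ∀ x > (0 : ℝ),
      Tendsto (fun s => (v (s * x) / v s - x ^ (-α)) / Atil s) atTop (nhds (h x)))
    (hne : ∃ x > (0 : ℝ), h x ≠ 0) :
    ∃ c : ℝ, c ≠ 0 ∧ ∀ x > (0 : ℝ),
      h x = c * x ^ (-α) * (1 - x ^ (-(ρ * α))) / (ρ * α) :=
  stmt15_general v Atil h α ρ hα hρ hv hAtil hlim hne
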